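/- arXiv:2305.00940 — 3 statements merged into one kernel-verified Lean document; each statement's English description precedes it below -/
import Mathlib

section
/- Monotonicity characterization for 2-additive set functions: let G = {1,…,m}, let w_j ∈ ℝ for j ∈ G and w_{jj'} ∈ ℝ for each unordered pair {j, j'} ⊆ G (with w_{jj'} = w_{j'j}), and define μ : 2^G → ℝ by μ(A) = Σ_{j ∈ A} w_j + Σ_{{j,j'} ⊆ A} w_{jj'}. Then μ satisfies μ(A) ≤ μ(B) for all A ⊆ B ⊆ G if and only if for every j ∈ G and every T ⊆ G \ {j} (including T = ∅) one has w_j + Σ_{j' ∈ T} w_{jj'} ≥ 0. -/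
/-- The 2-additive set function on `G = Fin m` determined by singleton weights `w`
and symmetric pair weights `w2`: `μ A = Σ_{j ∈ A} w j + Σ_{{j,j'} ⊆ A} w2 j j'`,
where the sum over unordered pairs is realized as a sum over pairs `j < j'`. -/
def twoAdditive {m : ℕ} (w : Fin m → ℝ) (w2 : Fin m → Fin m → ℝ)
    (A : Finset (Fin m)) : ℝ :=
  (∑ j ∈ A, w j) + ∑ j ∈ A, ∑ j' ∈ A.filter (fun j' => j < j'), w2 j j'

lemma twoAdditive_insert {m : ℕ} (w : Fin m → ℝ) (w2 : Fin m → Fin m → ℝ)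
    (hsymm : ∀ j j' : Fin m, w2 j j' = w2 j' j)
    {j : Fin m} {A : Finset (Fin m)} (hj : j ∉ A) :
    twoAdditive w w2 (insert j A)
      = twoAdditive w w2 A + (w j + ∑ j' ∈ A, w2 j j') := by
  unfold twoAdditive
  simp_rw [Finset.sum_filter, Finset.sum_insert hj]
  have hjj : ¬ (j < j) := lt_irrefl j
  have hrest : ∀ a ∈ A, (if a < j then w2 a j else 0) +
      (∑ j' ∈ A, if a < j' then w2 a j' else 0)
      = (∑ j' ∈ A, if a < j' then w2 a j' else 0) + (if a < j then w2 a j else 0) := by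
    intro a _; ring
  rw [Finset.sum_congr rfl hrest, Finset.sum_add_distrib]
  have hcomb : ∑ a ∈ A, (if a < j then w2 a j else 0)
      = ∑ a ∈ A, (w2 j a - if j < a then w2 j a else 0) := by
    refine Finset.sum_congr rfl fun a ha => ?_
    have hne : a ≠ j := fun h => hj (h ▸ ha)
    rcases lt_trichotomy a j with h | h | h
    · simp [h, not_lt_of_gt h, hsymm j a]
    · exact absurd h hne
    · simp [h, not_lt_of_gt h]
  rw [hcomb, Finset.sum_sub_distrib]
  simp only [hjj, if_false]
  ring

/-- Monotonicity characterization for 2-additive set functions: `μ` is monotone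
iff `w j + Σ_{j' ∈ T} w2 j j' ≥ 0` for every `j` and every `T ⊆ G \ {j}`. -/
theorem twoAdditive_monotone_iff {m : ℕ} (hm : 1 ≤ m)
    (w : Fin m → ℝ) (w2 : Fin m → Fin m → ℝ)
    (hsymm : ∀ j j' : Fin m, w2 j j' = w2 j' j) :
    (∀ A B : Finset (Fin m), A ⊆ B → twoAdditive w w2 A ≤ twoAdditive w w2 B) ↔
      (∀ j : Fin m, ∀ T : Finset (Fin m), j ∉ T →
        0 ≤ w j + ∑ j' ∈ T, w2 j j') := by
  constructor
  · intro h j T hjT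
    have := h T (insert j T) (Finset.subset_insert j T)
    rw [twoAdditive_insert w w2 hsymm hjT] at this
    linarith
  · intro h
    have key : ∀ n : ℕ, ∀ A B : Finset (Fin m), A ⊆ B → (B \ A).card = n →
        twoAdditive w w2 A ≤ twoAdditive w w2 B := by
      intro n
      induction n with
      | zero =>
        intro A B hAB hcard
        have : B \ A = ∅ := Finset.card_eq_zero.mp hcard
        have hBA : B ⊆ A := fun x hx => by
          by_contra hxA
          have hx' : x ∈ B \ A := Finset.mem_sdiff.mpr ⟨hx, hxA⟩
          rw [this] at hx'
          exact absurd hx' (Finset.notMem_empty x)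
        rw [Finset.Subset.antisymm hAB hBA]
      | succ n ih =>
        intro A B hAB hcard
        have hne : (B \ A).Nonempty := Finset.card_pos.mp (by omega)
        obtain ⟨j, hjmem⟩ := hne
        obtain ⟨hjB, hjA⟩ := Finset.mem_sdiff.mp hjmem
        have h1 : twoAdditive w w2 A ≤ twoAdditive w w2 (insert j A) := by
          rw [twoAdditive_insert w w2 hsymm hjA]
          have := h j A hjA
          linarith
        have h2 : insert j A ⊆ B := Finset.insert_subset hjB hAB
        have h3 : (B \ insert j A).card = n := by
          have : B \ insert j A = (B \ A).erase j := by
            ext x; simp [Finset.mem_sdiff, Finset.mem_erase, and_comm, and_assoc, not_or]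
          rw [this, Finset.card_erase_of_mem hjmem, hcard]
          omega
        exact le_trans h1 (ih (insert j A) B h2 h3)
    intro A B hAB
    exact key _ A B hAB rfl
end

section
/- Capacity characterization for 2-additive set functions: let G = {1,…,m}, let w_j ∈ ℝ for j ∈ G and w_{jj'} ∈ ℝ for each unordered pair {j, j'} ⊆ G (with w_{jj'} = w_{j'j}), and define μ : 2^G → ℝ by μ(A) = Σ_{j ∈ A} w_j + Σ_{{j,j'} ⊆ A} w_{jj'}. Then μ is a capacity (i.e., μ(∅) = 0, μ(G) = 1, and μ(A) ≤ μ(B) for all A ⊆ B ⊆ G) if and only if Σ_{j ∈ G} w_j + Σ_{{j,j'} ⊆ G} w_{jj'} = 1 and, for every j ∈ G and every T ⊆ G \ {j} (including T = ∅), w_j + Σ_{j' ∈ T} w_{jj'} ≥ 0. -/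
/-- A capacity on the finite set `G = Fin m`. -/
def IsCapacity {m : ℕ} (μ : Finset (Fin m) → ℝ) : Prop :=
  μ ∅ = 0 ∧ μ Finset.univ = 1 ∧ ∀ A B : Finset (Fin m), A ⊆ B → μ A ≤ μ B

lemma twoAdditive_mono_aux {m : ℕ} (w : Fin m → ℝ) (w2 : Fin m → Fin m → ℝ)
    (hsymm : ∀ j j' : Fin m, w2 j j' = w2 j' j)
    (hpos : ∀ j : Fin m, ∀ T : Finset (Fin m), j ∉ T → 0 ≤ w j + ∑ j' ∈ T, w2 j j')
    (s : Finset (Fin m)) :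
    ∀ A : Finset (Fin m), Disjoint A s → twoAdditive w w2 A ≤ twoAdditive w w2 (A ∪ s) := by
  induction s using Finset.induction_on with
  | empty => intro A _; simp
  | @insert a s' ha' ih =>
    intro A hdis
    have hdis' : Disjoint A s' := hdis.mono_right (Finset.subset_insert _ _)
    have haA : a ∉ A ∪ s' := by
      intro h
      rcases Finset.mem_union.mp h with h | h
      · exact (Finset.disjoint_left.mp hdis h) (Finset.mem_insert_self a s')
      · exact ha' h
    have heq : A ∪ insert a s' = insert a (A ∪ s') := by
      ext x; simp [Finset.mem_insert, Finset.mem_union, or_left_comm]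
    rw [heq, twoAdditive_insert w w2 hsymm haA]
    have := hpos a (A ∪ s') haA
    have := ih A hdis'
    linarith

/-- Capacity characterization for 2-additive set functions: `μ` is a capacity iff
the weights are normalized and the monotonicity conditions on the weights hold. -/
theorem twoAdditive_isCapacity_iff {m : ℕ} (hm : 1 ≤ m)
    (w : Fin m → ℝ) (w2 : Fin m → Fin m → ℝ)
    (hsymm : ∀ j j' : Fin m, w2 j j' = w2 j' j) :
    IsCapacity (twoAdditive w w2) ↔
      (twoAdditive w w2 Finset.univ = 1 ∧
        ∀ j : Fin m, ∀ T : Finset (Fin m), j ∉ T →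
          0 ≤ w j + ∑ j' ∈ T, w2 j j') := by
  constructor
  · rintro ⟨h0, h1, hmono⟩
    refine ⟨h1, fun j T hj => ?_⟩
    have := hmono T (insert j T) (Finset.subset_insert _ _)
    rw [twoAdditive_insert w w2 hsymm hj] at this
    linarith
  · rintro ⟨hnorm, hpos⟩
    refine ⟨by simp [twoAdditive], hnorm, fun A B hAB => ?_⟩
    have := twoAdditive_mono_aux w w2 hsymm hpos (B \ A) A Finset.disjoint_sdiff
    rwa [Finset.union_sdiff_of_subset hAB] at this
end

section
/- Choquet integral formula for 2-additive capacities: let G = {1,…,m}, let w_j ∈ ℝ for j ∈ G and w_{jj'} ∈ ℝ for unordered pairs {j, j'} ⊆ G (with w_{jj'} = w_{j'j}), and suppose μ : 2^G → ℝ defined by μ(A) = Σ_{j ∈ A} w_j + Σ_{{j,j'} ⊆ A} w_{jj'} is a capacity. Then for every nonnegative function g : G → ℝ, the Choquet integral of g with respect to μ equals Σ_{j ∈ G} w_j·g(j) + Σ_{{j,j'} ⊆ G} w_{jj'}·min{g(j), g(j')}. -/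
/-- The sorted-sum expression defining the Choquet integral. -/
noncomputable def choquetSum {m : ℕ} (μ : Finset (Fin m) → ℝ) (g : Fin m → ℝ)
    (σ : Equiv.Perm (Fin m)) : ℝ :=
  ∑ j : Fin m,
    μ (Finset.univ.filter fun h => g (σ j) ≤ g h) *
      (g (σ j) - if _ : (j : ℕ) = 0 then 0
        else g (σ ⟨(j : ℕ) - 1, lt_of_le_of_lt (Nat.sub_le _ _) j.isLt⟩))

/-- Telescoping identity: the Choquet sum of the indicator of the level set at
height `t = g h` equals `t`. -/
lemma key_tele {m : ℕ} (g : Fin m → ℝ) (σ : Equiv.Perm (Fin m))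
    (hσ : ∀ j j' : Fin m, j ≤ j' → g (σ j) ≤ g (σ j'))
    (t : ℝ) (h : Fin m) (ht : t = g h) :
    ∑ j : Fin m,
      (if g (σ j) ≤ t then (1:ℝ) else 0) *
        (g (σ j) - if _ : (j : ℕ) = 0 then 0
          else g (σ ⟨(j : ℕ) - 1, lt_of_le_of_lt (Nat.sub_le _ _) j.isLt⟩)) = t := by
  classical
  set S : Finset (Fin m) := Finset.univ.filter (fun j => g (σ j) ≤ t) with hS
  have hmem : σ.symm h ∈ S := by simp [hS, ht]
  have hne : S.Nonempty := ⟨σ.symm h, hmem⟩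
  set K := S.max' hne with hK
  have hKle : g (σ K) ≤ t := by
    have := S.max'_mem hne
    simp [hS] at this; exact this
  have hKt : g (σ K) = t := by
    refine le_antisymm hKle ?_
    have h1 : σ.symm h ≤ K := S.le_max' _ hmem
    have h2 := hσ _ _ h1
    rw [ht]
    simpa using h2
  have hiff : ∀ j : Fin m, (g (σ j) ≤ t ↔ (j : ℕ) ≤ (K : ℕ)) := by
    intro j
    constructor
    · intro hj
      exact_mod_cast S.le_max' j (by simp [hS, hj])
    · intro hj
      exact le_trans (hσ j K (by exact_mod_cast hj)) hKle
  set F : ℕ → ℝ := fun i => if hi : 0 < i ∧ i ≤ m then g (σ ⟨i - 1, by omega⟩) else 0 with hF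
  have hFsucc : ∀ j : Fin m, F ((j : ℕ) + 1) = g (σ j) := by
    intro j
    simp only [hF]
    rw [dif_pos ⟨Nat.succ_pos _, j.isLt⟩]
    simp
  have hterm : ∀ j : Fin m,
      (if g (σ j) ≤ t then (1:ℝ) else 0) *
        (g (σ j) - if _ : (j : ℕ) = 0 then 0
          else g (σ ⟨(j : ℕ) - 1, lt_of_le_of_lt (Nat.sub_le _ _) j.isLt⟩))
      = (if (j : ℕ) ≤ (K : ℕ) then F ((j : ℕ) + 1) - F (j : ℕ) else 0) := by
    intro j
    by_cases hj : g (σ j) ≤ t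
    · rw [if_pos hj, if_pos ((hiff j).1 hj), one_mul, hFsucc j]
      congr 1
      by_cases h0 : (j : ℕ) = 0
      · rw [dif_pos h0]
        simp only [hF]
        rw [dif_neg (by omega)]
      · rw [dif_neg h0]
        simp only [hF]
        rw [dif_pos ⟨by omega, le_of_lt j.isLt⟩]
    · rw [if_neg hj, if_neg (fun hc => hj ((hiff j).2 hc)), zero_mul]
  rw [Finset.sum_congr rfl (fun j _ => hterm j)]
  rw [Fin.sum_univ_eq_sum_range (fun i => if i ≤ (K : ℕ) then F (i + 1) - F i else 0)]
  rw [← Finset.sum_filter]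
  have hset : (Finset.range m).filter (fun i => i ≤ (K : ℕ)) = Finset.range ((K : ℕ) + 1) := by
    ext i
    simp only [Finset.mem_filter, Finset.mem_range]
    have := K.isLt
    omega
  rw [hset, Finset.sum_range_sub F]
  rw [hFsucc K, hKt]
  simp only [hF]
  rw [dif_neg (by omega)]
  ring

/-- Choquet integral formula for 2-additive capacities:
`C_μ(g) = Σ_j w j * g j + Σ_{{j,j'}} w2 j j' * min (g j) (g j')`. -/
theorem choquetSum_twoAdditive {m : ℕ} (hm : 1 ≤ m)
    (w : Fin m → ℝ) (w2 : Fin m → Fin m → ℝ)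
    (hsymm : ∀ j j' : Fin m, w2 j j' = w2 j' j)
    (hcap : IsCapacity (twoAdditive w w2))
    (g : Fin m → ℝ) (hg : ∀ j, 0 ≤ g j)
    (σ : Equiv.Perm (Fin m))
    (hσ : ∀ j j' : Fin m, j ≤ j' → g (σ j) ≤ g (σ j')) :
    choquetSum (twoAdditive w w2) g σ =
      (∑ j : Fin m, w j * g j) +
        ∑ j : Fin m, ∑ j' ∈ Finset.univ.filter (fun j' => j < j'),
          w2 j j' * min (g j) (g j') := by
  classical
  set D : Fin m → ℝ := fun k => g (σ k) - if _ : (k : ℕ) = 0 then 0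
      else g (σ ⟨(k : ℕ) - 1, lt_of_le_of_lt (Nat.sub_le _ _) k.isLt⟩) with hD
  have key : ∀ (t : ℝ) (h : Fin m), t = g h →
      ∑ k : Fin m, (if g (σ k) ≤ t then (1:ℝ) else 0) * D k = t := by
    intro t h ht
    simpa only [hD] using key_tele g σ hσ t h ht
  have expand : ∀ k : Fin m,
      twoAdditive w w2 (Finset.univ.filter fun h => g (σ k) ≤ g h)
      = (∑ j : Fin m, (if g (σ k) ≤ g j then (1:ℝ) else 0) * w j)
        + ∑ j : Fin m, ∑ j' ∈ Finset.univ.filter (fun j' => j < j'),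
            (if g (σ k) ≤ min (g j) (g j') then (1:ℝ) else 0) * w2 j j' := by
    intro k
    unfold twoAdditive
    congr 1
    · rw [Finset.sum_filter]
      exact Finset.sum_congr rfl (fun j _ => by split <;> simp)
    · rw [Finset.sum_filter]
      refine Finset.sum_congr rfl (fun j _ => ?_)
      have hsub : (Finset.univ.filter (fun h => g (σ k) ≤ g h)).filter (fun j' => j < j')
          = (Finset.univ.filter (fun j' => j < j')).filter (fun j' => g (σ k) ≤ g j') := by
        ext x; simp [and_comm]
      by_cases hj : g (σ k) ≤ g j
      · rw [if_pos hj, hsub, Finset.sum_filter]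
        refine Finset.sum_congr rfl (fun j' _ => ?_)
        by_cases hj2 : g (σ k) ≤ g j'
        · rw [if_pos hj2, if_pos (le_min hj hj2), one_mul]
        · rw [if_neg hj2, if_neg (fun hc => hj2 (le_trans hc (min_le_right _ _))), zero_mul]
      · rw [if_neg hj]
        symm
        refine Finset.sum_eq_zero (fun j' _ => ?_)
        rw [if_neg (fun hc => hj (le_trans hc (min_le_left _ _))), zero_mul]
  unfold choquetSum
  have hchg : ∀ k : Fin m,
      twoAdditive w w2 (Finset.univ.filter fun h => g (σ k) ≤ g h) *
        (g (σ k) - if _ : (k : ℕ) = 0 then 0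
          else g (σ ⟨(k : ℕ) - 1, lt_of_le_of_lt (Nat.sub_le _ _) k.isLt⟩))
      = ((∑ j : Fin m, (if g (σ k) ≤ g j then (1:ℝ) else 0) * w j)
          + ∑ j : Fin m, ∑ j' ∈ Finset.univ.filter (fun j' => j < j'),
              (if g (σ k) ≤ min (g j) (g j') then (1:ℝ) else 0) * w2 j j') * D k := by
    intro k
    rw [expand k, hD]
  rw [Finset.sum_congr rfl (fun k _ => hchg k)]
  simp only [add_mul, Finset.sum_mul]
  rw [Finset.sum_add_distrib]
  congr 1
  · rw [Finset.sum_comm]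
    refine Finset.sum_congr rfl (fun j _ => ?_)
    have h1 : ∀ k : Fin m, ((if g (σ k) ≤ g j then (1:ℝ) else 0) * w j) * D k
        = w j * ((if g (σ k) ≤ g j then (1:ℝ) else 0) * D k) := fun k => by ring
    rw [Finset.sum_congr rfl (fun k _ => h1 k), ← Finset.mul_sum, key (g j) j rfl]
  · rw [Finset.sum_comm]
    refine Finset.sum_congr rfl (fun j _ => ?_)
    rw [Finset.sum_comm]
    refine Finset.sum_congr rfl (fun j' _ => ?_)
    have h1 : ∀ k : Fin m, ((if g (σ k) ≤ min (g j) (g j') then (1:ℝ) else 0) * w2 j j') * D k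
        = w2 j j' * ((if g (σ k) ≤ min (g j) (g j') then (1:ℝ) else 0) * D k) := fun k => by ring
    rw [Finset.sum_congr rfl (fun k _ => h1 k), ← Finset.mul_sum]
    rcases min_choice (g j) (g j') with hmin | hmin
    · rw [key _ j hmin]
    · rw [key _ j' hmin]
end
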